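/- arXiv:1101.4304 — 2 statements merged into one kernel-verified Lean document; each statement's English description precedes it below -/
import Mathlib

section
/- Let R be a ring and let M and N be R-modules with M Noetherian. If M ⊕ N is isomorphic to M, then N = 0. -/
/-- If `M` is a Noetherian `R`-module, `N` any `R`-module, and `M ⊕ N ≅ M`
as `R`-modules, then `N = 0`. -/
theorem noetherian_summand_absorption
    (R : Type*) [Ring R]
    (M : Type*) [AddCommGroup M] [Module R M] [IsNoetherian R M]
    (N : Type*) [AddCommGroup N] [Module R N]
    (e : (M × N) ≃ₗ[R] M) :
    ∀ n : N, n = 0 :=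
  have : Subsingleton N :=
    IsNoetherian.subsingleton_of_prod_injective e.toLinearMap e.injective
  fun n => Subsingleton.elim n 0
end

section
/- In C[x,y,t,w₀,w₁,w₂], there is an equality of cycles V(y² − x³ − t²x², y w₂ + t x² w₁, w₀, w₁, w₂ − 1) = 2·V(x, y, w₀, w₁, w₂ − 1) + V(x + t², y, w₀, w₁, w₂ − 1). -/
open MvPolynomial

/-! A prime containing `y` and `x²(x + t²)` contains `x` or `x + t²`, so it contains `⟨x, y⟩` or
`⟨x + t², y⟩`. Localizing at `⟨x, y⟩` inverts `x + t²`, so the ideal becomes `(y, x²)` and the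
maximal ideal is spanned modulo it by the class of `x`, which is nonzero because
`x s ∈ ⟨y, x²(x + t²)⟩` forces `s ∈ ⟨x, y⟩`. Localizing at `⟨x + t², y⟩` inverts `x²`, so there
the ideal becomes the maximal ideal and the quotient is the residue field. -/

/-- The length of a module, as the Krull dimension of its lattice of submodules. -/
noncomputable def moduleLength (R M : Type*) [Ring R] [AddCommGroup M] [Module R M] :
    WithBot ℕ∞ :=
  Order.krullDim (Submodule R M)

lemma moduleLength_eq_length (R M : Type*) [Ring R] [AddCommGroup M] [Module R M] :
    moduleLength R M = Module.length R M :=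
  (Module.coe_length R M).symm

section Length

variable {B : Type*} [CommRing B]

lemma length_quotient_of_isMaximal (m : Ideal B) [hm : m.IsMaximal] :
    Module.length B (B ⧸ m) = 1 :=
  Module.length_eq_one_iff.mpr (isSimpleModule_iff_isCoatom.mpr (Ideal.isMaximal_def.mp hm))

lemma isSimpleModule_span_singleton_of_smul_eq_zero {M : Type*} [AddCommGroup M] [Module B M]
    (m : Ideal B) [hm : m.IsMaximal] {v : M} (hv : v ≠ 0) (hmv : ∀ c ∈ m, c • v = 0) :
    IsSimpleModule B (B ∙ v) := by
  have htorsion : Ideal.torsionOf B M v = m :=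
    (hm.eq_of_le (by rwa [Ne, Ideal.torsionOf_eq_top_iff])
      fun c hc => (Ideal.mem_torsionOf_iff v c).mpr (hmv c hc)).symm
  have : IsSimpleModule B (B ⧸ Ideal.torsionOf B M v) :=
    htorsion ▸ isSimpleModule_iff_isCoatom.mpr (Ideal.isMaximal_def.mp hm)
  exact IsSimpleModule.congr (Ideal.quotTorsionOfEquivSpanSingleton B M v).symm

/-- `m / J` is spanned by the class of `ξ`, which `m` kills; so `0 ⊂ m / J ⊂ B / J` is a
composition series with both factors `≅ B / m`. -/
lemma length_quotient_eq_two {m J : Ideal B} [m.IsMaximal] {ξ : B}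
    (hm : m = J ⊔ Ideal.span {ξ}) (hξ : ξ ∉ J) (hmξ : ∀ c ∈ m, c * ξ ∈ J) :
    Module.length B (B ⧸ J) = 2 := by
  set N : Submodule B (B ⧸ J) := Submodule.map J.mkQ m
  have hJm : J ≤ m := hm ▸ le_sup_left
  have hN : N = B ∙ J.mkQ ξ := by
    simp only [N, hm, Submodule.map_sup, Submodule.mkQ_map_self, bot_sup_eq]
    rw [Ideal.span, Submodule.map_span, Set.image_singleton]
  have hNsimple : IsSimpleModule B N := by
    rw [hN]
    refine isSimpleModule_span_singleton_of_smul_eq_zero m ?_ fun c hc => ?_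
    · rwa [Ne, Submodule.mkQ_apply, Submodule.Quotient.mk_eq_zero]
    · rw [← map_smul, smul_eq_mul, Submodule.mkQ_apply, Submodule.Quotient.mk_eq_zero]
      exact hmξ c hc
  rw [Module.length_eq_add_of_exact N.subtype N.mkQ N.injective_subtype N.mkQ_surjective
      (LinearMap.exact_subtype_mkQ N),
    (Submodule.quotientQuotientEquivQuotient J m hJm).length_eq,
    length_quotient_of_isMaximal, Module.length_eq_one]
  rfl

end Length

lemma Ideal.minimalPrimes_eq_pair {A : Type*} [CommRing A] {I p q : Ideal A}
    [hp : p.IsPrime] [hq : q.IsPrime] (hIp : I ≤ p) (hIq : I ≤ q) (hpq : ¬p ≤ q) (hqp : ¬q ≤ p)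
    (hcover : ∀ r : Ideal A, r.IsPrime → I ≤ r → p ≤ r ∨ q ≤ r) :
    I.minimalPrimes = {p, q} := by
  ext r
  constructor
  · rintro ⟨⟨hr, hIr⟩, hmin⟩
    rcases hcover r hr hIr with h | h
    · exact Or.inl (le_antisymm (hmin ⟨hp, hIp⟩ h) h)
    · exact Or.inr (le_antisymm (hmin ⟨hq, hIq⟩ h) h)
  · rintro (rfl | rfl)
    · refine ⟨⟨hp, hIp⟩, fun s ⟨hs, hIs⟩ hsr => ?_⟩
      exact (hcover s hs hIs).resolve_right fun h => hqp (h.trans hsr)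
    · refine ⟨⟨hq, hIq⟩, fun s ⟨hs, hIs⟩ hsr => ?_⟩
      exact (hcover s hs hIs).resolve_left fun h => hpq (h.trans hsr)

lemma MvPolynomial.notMem_span_of_eval_ne_zero {σ K : Type*} [CommRing K]
    {S : Set (MvPolynomial σ K)} {f : MvPolynomial σ K} (a : σ → K)
    (hS : ∀ g ∈ S, eval a g = 0) (hf : eval a f ≠ 0) :
    f ∉ Ideal.span S := fun h =>
  hf (Ideal.span_le (I := RingHom.ker (eval a)) |>.mpr hS h)

namespace PolarCycleTwelve

noncomputable abbrev R := MvPolynomial (Fin 3) ℂ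

noncomputable abbrev x : R := X 0
noncomputable abbrev y : R := X 1
noncomputable abbrev t : R := X 2

noncomputable abbrev 𝔞 : Ideal R := Ideal.span {y, x ^ 2 * (x + t ^ 2)}
noncomputable abbrev 𝔭₁ : Ideal R := Ideal.span {x, y}
noncomputable abbrev 𝔭₂ : Ideal R := Ideal.span {x + t ^ 2, y}

lemma x_add_t_sq_notMem_𝔭₁ : x + t ^ 2 ∉ 𝔭₁ :=
  notMem_span_of_eval_ne_zero ![0, 0, 1] (by simp) (by simp)

lemma x_sq_notMem_𝔭₂ : x ^ 2 ∉ 𝔭₂ :=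
  notMem_span_of_eval_ne_zero ![-1, 0, 1] (by simp) (by simp)

lemma 𝔞_le_𝔭₁ : 𝔞 ≤ 𝔭₁ := by
  rw [Ideal.span_le, Set.insert_subset_iff, Set.singleton_subset_iff, pow_two, mul_assoc]
  exact ⟨Ideal.subset_span (by simp), Ideal.mul_mem_right _ _ (Ideal.subset_span (by simp))⟩

lemma 𝔞_le_𝔭₂ : 𝔞 ≤ 𝔭₂ := by
  rw [Ideal.span_le, Set.insert_subset_iff, Set.singleton_subset_iff]
  exact ⟨Ideal.subset_span (by simp), Ideal.mul_mem_left _ _ (Ideal.subset_span (by simp))⟩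

lemma 𝔭₁_le_or_𝔭₂_le_of_isPrime {q : Ideal R} (hq : q.IsPrime) (h : 𝔞 ≤ q) : 𝔭₁ ≤ q ∨ 𝔭₂ ≤ q := by
  have hy : y ∈ q := h (Ideal.subset_span (by simp))
  rcases hq.mem_or_mem (h (Ideal.subset_span (by simp) : x ^ 2 * (x + t ^ 2) ∈ 𝔞)) with hx | hxt
  · left
    rw [Ideal.span_le, Set.insert_subset_iff, Set.singleton_subset_iff]
    exact ⟨hq.mem_of_pow_mem 2 hx, hy⟩
  · right
    rw [Ideal.span_le, Set.insert_subset_iff, Set.singleton_subset_iff]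
    exact ⟨hxt, hy⟩

lemma minimalPrimes_eq [𝔭₁.IsPrime] [𝔭₂.IsPrime] : (𝔞).minimalPrimes = {𝔭₁, 𝔭₂} :=
  Ideal.minimalPrimes_eq_pair 𝔞_le_𝔭₁ 𝔞_le_𝔭₂
    (fun h => x_sq_notMem_𝔭₂ (Ideal.pow_mem_of_mem _ (h (Ideal.subset_span (by simp))) 2 two_pos))
    (fun h => x_add_t_sq_notMem_𝔭₁ (h (Ideal.subset_span (by simp))))
    fun _ => 𝔭₁_le_or_𝔭₂_le_of_isPrime

/-- Setting `y = 0` turns `x * s ∈ 𝔞` into `x * s(x,0,t) ∈ (x²(x+t²))`, so `s(x,0,t)` is a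
multiple of `x`, and `s ≡ s(x,0,t) mod y`. -/
lemma mem_𝔭₁_of_x_mul_mem {s : R} (hs : x * s ∈ 𝔞) : s ∈ 𝔭₁ := by
  let σ : R →ₐ[ℂ] R := aeval ![x, 0, t]
  obtain ⟨u, v, huv⟩ := Ideal.mem_span_pair.mp hs
  have hx : σ x = x := by simp [σ]
  have hy : σ y = 0 := by simp [σ]
  have ht : σ t = t := by simp [σ]
  have hσ : x * σ s = x * (x * (σ v * (x + t ^ 2))) := by
    calc x * σ s = σ (u * y + v * (x ^ 2 * (x + t ^ 2))) := by rw [huv, map_mul, hx]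
      _ = x * (x * (σ v * (x + t ^ 2))) := by
        simp only [map_add, map_mul, map_pow, hx, hy, ht]
        ring
  have hσs : σ s ∈ 𝔭₁ := by
    rw [mul_left_cancel₀ (X_ne_zero 0) hσ]
    exact Ideal.mul_mem_right _ _ (Ideal.subset_span (by simp))
  have hmk : (Ideal.Quotient.mkₐ ℂ 𝔭₁).comp σ = Ideal.Quotient.mkₐ ℂ 𝔭₁ := by
    ext i
    fin_cases i
    · simp [σ]
    · simpa [σ] using
        (Ideal.Quotient.eq_zero_iff_mem.mpr (Ideal.subset_span (by simp) : y ∈ 𝔭₁)).symm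
    · simp [σ]
  rw [← Ideal.Quotient.eq_zero_iff_mem, ← Ideal.Quotient.mkₐ_eq_mk ℂ, ← hmk]
  simpa [Ideal.Quotient.eq_zero_iff_mem] using hσs

section Localization

variable (B : Type*) [CommRing B] [Algebra R B]

lemma length_localization_𝔭₁ [𝔭₁.IsPrime] [IsLocalization.AtPrime B 𝔭₁] :
    Module.length B (B ⧸ 𝔞.map (algebraMap R B)) = 2 := by
  have := IsLocalization.AtPrime.isLocalRing B 𝔭₁
  set f := algebraMap R B
  have hx2 : f x * f x ∈ 𝔞.map f := by
    rw [← map_mul, IsLocalization.algebraMap_mem_map_algebraMap_iff 𝔭₁.primeCompl]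
    exact ⟨x + t ^ 2, x_add_t_sq_notMem_𝔭₁,
      Ideal.subset_span (Or.inr (Set.mem_singleton_iff.mpr (by ring)))⟩
  have hy : f y ∈ 𝔞.map f := Ideal.mem_map_of_mem f (Ideal.subset_span (by simp))
  have hm : 𝔭₁.map f = Ideal.span {f x, f y} := by rw [Ideal.map_span, Set.image_pair]
  apply length_quotient_eq_two (m := 𝔭₁.map f)
  · refine le_antisymm ?_ (sup_le (Ideal.map_mono 𝔞_le_𝔭₁) ?_)
    · rw [hm, Ideal.span_le, Set.insert_subset_iff, Set.singleton_subset_iff]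
      exact ⟨Ideal.mem_sup_right (Ideal.mem_span_singleton_self _), Ideal.mem_sup_left hy⟩
    · rw [Ideal.span_le, Set.singleton_subset_iff]
      exact Ideal.mem_map_of_mem f (Ideal.subset_span (by simp))
  · rw [IsLocalization.algebraMap_mem_map_algebraMap_iff 𝔭₁.primeCompl]
    rintro ⟨s, hs, hsx⟩
    exact hs (mem_𝔭₁_of_x_mul_mem (mul_comm s x ▸ hsx))
  · intro c hc
    obtain ⟨a, b, rfl⟩ := Ideal.mem_span_pair.mp (hm ▸ hc)
    rw [add_mul, mul_assoc, mul_assoc]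
    exact add_mem (Ideal.mul_mem_left _ _ hx2)
      (Ideal.mul_mem_left _ _ (Ideal.mul_mem_right _ _ hy))

lemma length_localization_𝔭₂ [𝔭₂.IsPrime] [IsLocalization.AtPrime B 𝔭₂] :
    Module.length B (B ⧸ 𝔞.map (algebraMap R B)) = 1 := by
  have := IsLocalization.AtPrime.isLocalRing B 𝔭₂
  set f := algebraMap R B
  have hJ : 𝔞.map f = 𝔭₂.map f := by
    refine le_antisymm (Ideal.map_mono 𝔞_le_𝔭₂) (Ideal.map_le_iff_le_comap.mpr ?_)
    rw [Ideal.span_le, Set.insert_subset_iff, Set.singleton_subset_iff]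
    refine ⟨?_, Ideal.mem_map_of_mem f (Ideal.subset_span (by simp))⟩
    exact (IsLocalization.algebraMap_mem_map_algebraMap_iff 𝔭₂.primeCompl _ _ _).mpr
      ⟨x ^ 2, x_sq_notMem_𝔭₂, Ideal.subset_span (by simp)⟩
  rw [hJ]
  exact length_quotient_of_isMaximal _

end Localization

/-- The cycle identity `V(y² − x³ − t²x², y w₂ + t x² w₁, w₀, w₁, w₂ − 1)
= 2·V(x, y, w₀, w₁, w₂ − 1) + V(x + t², y, w₀, w₁, w₂ − 1)`, reduced (by setting
`w₀ = w₁ = 0`, `w₂ = 1`) to `ℂ[x,y,t]`: the ideal `⟨y, x²(x+t²)⟩` has minimal primes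
`⟨x,y⟩` and `⟨x+t², y⟩`, with lengths `2` and `1` respectively at those primes. -/
theorem cycle_identity
    (hp₁ : (Ideal.span ({x, y} : Set R)).IsPrime)
    (hp₂ : (Ideal.span ({x + t ^ 2, y} : Set R)).IsPrime)
    (B₁ : Type) [CommRing B₁] [Algebra R B₁]
    [IsLocalization.AtPrime B₁ (Ideal.span ({x, y} : Set R))]
    (B₂ : Type) [CommRing B₂] [Algebra R B₂]
    [IsLocalization.AtPrime B₂ (Ideal.span ({x + t ^ 2, y} : Set R))] :
    (Ideal.span ({y, x ^ 2 * (x + t ^ 2)} : Set R)).minimalPrimes =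
        {Ideal.span ({x, y} : Set R), Ideal.span ({x + t ^ 2, y} : Set R)} ∧
      moduleLength B₁
        (B₁ ⧸ (Ideal.span ({y, x ^ 2 * (x + t ^ 2)} : Set R)).map (algebraMap R B₁)) = 2 ∧
      moduleLength B₂
        (B₂ ⧸ (Ideal.span ({y, x ^ 2 * (x + t ^ 2)} : Set R)).map (algebraMap R B₂)) = 1 := by
  refine ⟨minimalPrimes_eq, ?_, ?_⟩
  · rw [moduleLength_eq_length, length_localization_𝔭₁]
    rfl
  · rw [moduleLength_eq_length, length_localization_𝔭₂]
    rfl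

end PolarCycleTwelve
end
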